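/- Let p be an integer-valued supermodular set-function on the subsets of a nonempty finite set S with p(∅) = 0, and assume Ḃ(p) is nonempty. Then the minimum, over all β₁-covered elements m of Ḃ(p), of the number |{s ∈ S : m(s) = β₁}| of β₁-valued components of m equals max{ p(X) − (β₁ − 1)·|X| : X ⊆ S }. -/

import Mathlib

open Finset

variable {α : Type*}

/-- Integer-valued supermodular set-function. -/
def Supermodular [DecidableEq α] (p : Finset α → ℤ) : Prop :=
  ∀ X Y : Finset α, p X + p Y ≤ p (X ∩ Y) + p (X ∪ Y)

/-- The M-convex set `Ḃ(p)` of integral elements of the base-polyhedron `B'(p)`: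
all `m : α → ℤ` with `m̃(X) ≥ p(X)` for every `X` and `m̃(S) = p(S)`. -/
def Bdot [Fintype α] (p : Finset α → ℤ) : Set (α → ℤ) :=
  {m | (∀ X : Finset α, p X ≤ ∑ s ∈ X, m s) ∧ (∑ s, m s) = p Finset.univ}

/-- `x↓`: the values of `x` arranged in nonincreasing order. -/
def sortedDesc [Fintype α] (x : α → ℤ) : List ℤ :=
  ((Finset.univ.val.map x).sort (· ≤ ·)).reverse

/-- `x↑`: the values of `x` arranged in nondecreasing order. -/
def sortedAsc [Fintype α] (x : α → ℤ) : List ℤ :=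
  (Finset.univ.val.map x).sort (· ≤ ·)

/-- `x ≤_dec y`: `x↓` is lexicographically less than or equal to `y↓`. -/
def DecLE [Fintype α] (x y : α → ℤ) : Prop :=
  sortedDesc x = sortedDesc y ∨ List.Lex (· < ·) (sortedDesc x) (sortedDesc y)

/-- `x ≤_inc y`: `x↑` is lexicographically less than or equal to `y↑`. -/
def IncLE [Fintype α] (x y : α → ℤ) : Prop :=
  sortedAsc x = sortedAsc y ∨ List.Lex (· < ·) (sortedAsc x) (sortedAsc y)

/-- `m` is a decreasingly minimal element of `Bdot p`. -/
def DecMin [Fintype α] (p : Finset α → ℤ) (m : α → ℤ) : Prop :=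
  m ∈ Bdot p ∧ ∀ y ∈ Bdot p, DecLE m y

/-- `m` is `β`-covered: every component is at most `β`. -/
def IsCovered [Fintype α] (β : ℤ) (m : α → ℤ) : Prop := ∀ s : α, m s ≤ β

/-- `m` is a pre-dec-min element of `Ḃ(p)` (with respect to the bound `β`):
it is a `β`-covered element of `Ḃ(p)` with a minimum number of `β`-valued
components among all `β`-covered elements of `Ḃ(p)`. -/
def PreDecMin [Fintype α] [DecidableEq α] (p : Finset α → ℤ) (β : ℤ) (m : α → ℤ) : Prop :=
  m ∈ Bdot p ∧ IsCovered β m ∧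
    ∀ m' ∈ Bdot p, IsCovered β m' →
      (Finset.univ.filter (fun s => m s = β)).card ≤
        (Finset.univ.filter (fun s => m' s = β)).card

/-- `S₁(m)`: the intersection of all `m`-tight sets containing every `β`-valued element. -/
def S1m [Fintype α] (p : Finset α → ℤ) (β : ℤ) (m : α → ℤ) : Set α :=
  {s | ∀ X : Finset α, (∑ v ∈ X, m v = p X) → (∀ t : α, m t = β → t ∈ X) → s ∈ X}

/-!
For a `β`-covered `m` we have `m̃(X) ≤ (β - 1)|X| + #{s ∈ X : m(s) = β}`, which gives
`p(X) - (β - 1)|X| ≤ #{s : m(s) = β}` for every `X`. For equality take `m` with fewest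
`β`-valued components and let `X₀` be the smallest `m`-tight set containing them (tight sets
are closed under `∩` and `∪` by supermodularity). Each `t ∈ X₀` is forced by some `β`-valued
`s`, meaning every tight set containing `s` contains `t`; so if `m(t) ≤ β - 2`, moving a unit
from `s` to `t` stays in `Ḃ(p)` and has fewer `β`-valued components. Hence `m ≥ β - 1` on `X₀`,
and tightness of `X₀` turns the inequality into an equality.
-/

section

variable {p : Finset α → ℤ} {m : α → ℤ} {β : ℤ}

def IsTight (p : Finset α → ℤ) (m : α → ℤ) (X : Finset α) : Prop :=
  ∑ v ∈ X, m v = p X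

instance (p : Finset α → ℤ) (m : α → ℤ) : DecidablePred (IsTight p m) :=
  fun _ => inferInstanceAs (Decidable (_ = _))

lemma sum_sub_one_add_indicator (X : Finset α) :
    ∑ v ∈ X, ((β - 1) + if m v = β then 1 else 0) =
      (β - 1) * X.card + (X.filter fun v => m v = β).card := by
  rw [Finset.sum_add_distrib, Finset.sum_const, Finset.sum_boole, nsmul_eq_mul, mul_comm]

lemma sum_le_of_isCovered [Fintype α] (hm : IsCovered β m) (X : Finset α) :
    ∑ v ∈ X, m v ≤ (β - 1) * X.card + (X.filter fun v => m v = β).card := by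
  rw [← sum_sub_one_add_indicator]
  refine Finset.sum_le_sum fun v _ => ?_
  have := hm v
  split_ifs <;> omega

lemma sum_eq_of_isCovered [Fintype α] (hm : IsCovered β m) {X : Finset α}
    (hX : ∀ v ∈ X, β - 1 ≤ m v) :
    ∑ v ∈ X, m v = (β - 1) * X.card + (X.filter fun v => m v = β).card := by
  rw [← sum_sub_one_add_indicator]
  refine Finset.sum_congr rfl fun v hv => ?_
  have := hm v
  have := hX v hv
  split_ifs <;> omega

lemma sub_mul_card_le_card_of_isCovered [Fintype α] (hm : m ∈ Bdot p) (hcov : IsCovered β m)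
    (X : Finset α) :
    p X - (β - 1) * X.card ≤ (univ.filter fun v => m v = β).card := by
  have hsum := sum_le_of_isCovered hcov X
  have hcard : (X.filter fun v => m v = β).card ≤ (univ.filter fun v => m v = β).card :=
    Finset.card_le_card (Finset.filter_subset_filter _ (Finset.subset_univ X))
  have := hm.1 X
  omega

variable [DecidableEq α]

lemma Supermodular.isTight_inter_union (hp : Supermodular p)
    (hm : ∀ X, p X ≤ ∑ v ∈ X, m v) {Y Y' : Finset α} (hY : IsTight p m Y)
    (hY' : IsTight p m Y') :
    IsTight p m (Y ∩ Y') ∧ IsTight p m (Y ∪ Y') := by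
  have := hp Y Y'
  have := hm (Y ∩ Y')
  have := hm (Y ∪ Y')
  have := Finset.sum_union_inter (s₁ := Y) (s₂ := Y') (f := m)
  unfold IsTight at *
  omega

lemma add_single_sub_single_apply (s t v : α) :
    (m + Pi.single t 1 - Pi.single s 1 : α → ℤ) v =
      m v + (if v = t then 1 else 0) - (if v = s then 1 else 0) := by
  simp only [Pi.sub_apply, Pi.add_apply, Pi.single_apply]

lemma sum_add_single_sub_single (Y : Finset α) (s t : α) :
    ∑ v ∈ Y, (m + Pi.single t 1 - Pi.single s 1 : α → ℤ) v =
      ∑ v ∈ Y, m v + (if t ∈ Y then 1 else 0) - (if s ∈ Y then 1 else 0) := by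
  simp only [Pi.sub_apply, Pi.add_apply, Finset.sum_sub_distrib, Finset.sum_add_distrib,
    Finset.sum_pi_single']

variable [Fintype α]

-- For `F` the set of `β`-valued components of `m`, this is the set `S₁(m)` of `S1m`.
def tightClosure (p : Finset α → ℤ) (m : α → ℤ) (F : Finset α) : Finset α :=
  (univ.filter fun Y => IsTight p m Y ∧ F ⊆ Y).inf id

lemma subset_tightClosure (F : Finset α) : F ⊆ tightClosure p m F :=
  Finset.le_inf fun _ hY => (Finset.mem_filter.1 hY).2.2

lemma tightClosure_subset {F Y : Finset α} (hY : IsTight p m Y) (hFY : F ⊆ Y) :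
    tightClosure p m F ⊆ Y :=
  Finset.inf_le (f := id) (Finset.mem_filter.2 ⟨Finset.mem_univ _, hY, hFY⟩)

lemma isTight_tightClosure (hp : Supermodular p) (hm : m ∈ Bdot p) (F : Finset α) :
    IsTight p m (tightClosure p m F) :=
  Finset.inf_induction (p := IsTight p m) hm.2
    (fun _ hY _ hY' => (hp.isTight_inter_union hm.1 hY hY').1)
    fun _ hY => (Finset.mem_filter.1 hY).2.1

/-- Otherwise the union, over `s ∈ F`, of tight sets containing `s` but not `t` would be a
tight set containing `F` but not `t`. -/
lemma exists_forall_isTight_mem_of_mem_tightClosure (hp : Supermodular p) (h0 : p ∅ = 0)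
    (hm : m ∈ Bdot p) {F : Finset α} {t : α} (ht : t ∈ tightClosure p m F) :
    ∃ s ∈ F, ∀ Y, IsTight p m Y → s ∈ Y → t ∈ Y := by
  by_contra! hforce
  choose! Y hYtight hsY htY using hforce
  have hU : IsTight p m (F.sup Y) :=
    Finset.sup_induction (p := IsTight p m) (by simp [IsTight, h0])
      (fun _ hA _ hB => (hp.isTight_inter_union hm.1 hA hB).2) hYtight
  have hFU : F ⊆ F.sup Y := fun s hs => Finset.le_sup (f := Y) hs (hsY s hs)
  obtain ⟨s, hs, hts⟩ := Finset.mem_sup.1 (tightClosure_subset hU hFU ht)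
  exact htY s hs hts

/-- Only the sets containing `s` but not `t` lose a unit, and none of them is tight. -/
lemma add_single_sub_single_mem_Bdot (hm : m ∈ Bdot p) {s t : α}
    (hst : ∀ Y, IsTight p m Y → s ∈ Y → t ∈ Y) :
    (m + Pi.single t 1 - Pi.single s 1 : α → ℤ) ∈ Bdot p := by
  refine ⟨fun Y => ?_, ?_⟩
  · have hle := hm.1 Y
    rw [sum_add_single_sub_single]
    by_cases hsY : s ∈ Y
    · by_cases htY : t ∈ Y
      · simp [hsY, htY, hle]
      · have hlt : p Y < ∑ v ∈ Y, m v := lt_of_le_of_ne hle fun h => htY (hst Y h.symm hsY)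
        simp only [hsY, htY, if_true, if_false]
        omega
    · split_ifs <;> omega
  · rw [sum_add_single_sub_single]
    simp [hm.2]

lemma IsCovered.add_single_sub_single (hcov : IsCovered β m) {s t : α} (hs : m s = β)
    (ht : m t ≤ β - 2) : IsCovered β (m + Pi.single t 1 - Pi.single s 1) := by
  intro v
  have := hcov v
  rw [add_single_sub_single_apply]
  split_ifs <;> subst_vars <;> omega

lemma card_filter_add_single_sub_single_lt {s t : α} (hs : m s = β) (ht : m t ≤ β - 2) :
    (univ.filter fun v => (m + Pi.single t 1 - Pi.single s 1 : α → ℤ) v = β).card <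
      (univ.filter fun v => m v = β).card := by
  refine lt_of_le_of_lt (Finset.card_le_card fun v hv => ?_)
    (Finset.card_erase_lt_of_mem (s := univ.filter fun v => m v = β) (a := s) (by simpa))
  rw [Finset.mem_filter, add_single_sub_single_apply] at hv
  rw [Finset.mem_erase, Finset.mem_filter]
  split_ifs at hv <;> simp_all
  omega

lemma exists_preDecMin (h : ∃ m ∈ Bdot p, IsCovered β m) : ∃ m, PreDecMin p β m := by
  obtain ⟨m, ⟨hm, hcov⟩, hmin⟩ :=
    (measure fun m : α → ℤ => (univ.filter fun v => m v = β).card).wf.has_min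
      {m | m ∈ Bdot p ∧ IsCovered β m} (let ⟨m, hm, hcov⟩ := h; ⟨m, hm, hcov⟩)
  exact ⟨m, hm, hcov, fun m' hm' hcov' => not_lt.1 (hmin m' ⟨hm', hcov'⟩)⟩

lemma PreDecMin.sub_one_le_of_mem_tightClosure (hp : Supermodular p) (h0 : p ∅ = 0)
    (hmin : PreDecMin p β m) {t : α}
    (ht : t ∈ tightClosure p m (univ.filter fun v => m v = β)) : β - 1 ≤ m t := by
  obtain ⟨hm, hcov, hfewest⟩ := hmin
  by_contra! hlt
  obtain ⟨s, hs, hforce⟩ := exists_forall_isTight_mem_of_mem_tightClosure hp h0 hm ht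
  have hsβ : m s = β := (Finset.mem_filter.1 hs).2
  have hfewer := card_filter_add_single_sub_single_lt hsβ (t := t) (by omega)
  exact hfewer.not_ge (hfewest _ (add_single_sub_single_mem_Bdot hm hforce)
    (hcov.add_single_sub_single hsβ (by omega)))

lemma PreDecMin.sub_mul_card_tightClosure (hp : Supermodular p) (h0 : p ∅ = 0)
    (hmin : PreDecMin p β m) :
    let X₀ := tightClosure p m (univ.filter fun v => m v = β)
    p X₀ - (β - 1) * X₀.card = (univ.filter fun v => m v = β).card := by
  intro X₀
  have hfilter : (X₀.filter fun v => m v = β) = univ.filter fun v => m v = β := by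
    ext v
    simp only [Finset.mem_filter, Finset.mem_univ, true_and, and_iff_right_iff_imp]
    exact fun hv => subset_tightClosure _ (Finset.mem_filter.2 ⟨Finset.mem_univ v, hv⟩)
  rw [← isTight_tightClosure hp hmin.1 _, sum_eq_of_isCovered hmin.2.1
    fun _ => hmin.sub_one_le_of_mem_tightClosure hp h0, hfilter]
  ring

end

theorem stmt4_general [Fintype α] [DecidableEq α]
    (p : Finset α → ℤ) (hp : Supermodular p) (h0 : p ∅ = 0)
    (β₁ : ℤ)
    (hβ : IsLeast {b : ℤ | ∃ m ∈ Bdot p, ∀ s : α, m s ≤ b} β₁) :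
    ∃ r : ℤ,
      IsLeast {z : ℤ | ∃ m ∈ Bdot p, IsCovered β₁ m ∧
        z = ((Finset.univ.filter (fun s => m s = β₁)).card : ℤ)} r ∧
      IsGreatest {z : ℤ | ∃ X : Finset α, z = p X - (β₁ - 1) * X.card} r := by
  obtain ⟨m, hmin⟩ := exists_preDecMin hβ.1
  refine ⟨(univ.filter fun v => m v = β₁).card, ⟨⟨m, hmin.1, hmin.2.1, rfl⟩, ?_⟩,
    ⟨_, (hmin.sub_mul_card_tightClosure hp h0).symm⟩, ?_⟩
  · rintro _ ⟨m', hm', hcov', rfl⟩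
    exact_mod_cast hmin.2.2 m' hm' hcov'
  · rintro _ ⟨X, rfl⟩
    exact sub_mul_card_le_card_of_isCovered hmin.1 hmin.2.1 X

/-- Min-max: the minimum number of `β₁`-valued components of a `β₁`-covered element
of `Ḃ(p)` equals `max{ p(X) − (β₁ − 1)·|X| : X ⊆ S }`. -/
theorem stmt4 [Fintype α] [DecidableEq α] [Nonempty α]
    (p : Finset α → ℤ) (hp : Supermodular p) (h0 : p ∅ = 0)
    (hne : (Bdot p).Nonempty) (β₁ : ℤ)
    (hβ : IsLeast {b : ℤ | ∃ m ∈ Bdot p, ∀ s : α, m s ≤ b} β₁) :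
    ∃ r : ℤ,
      IsLeast {z : ℤ | ∃ m ∈ Bdot p, IsCovered β₁ m ∧
        z = ((Finset.univ.filter (fun s => m s = β₁)).card : ℤ)} r ∧
      IsGreatest {z : ℤ | ∃ X : Finset α, z = p X - (β₁ - 1) * X.card} r :=
  stmt4_general p hp h0 β₁ hβ
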